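/- arXiv:1702.08274 — 2 statements merged into one kernel-verified Lean document; each statement's English description precedes it below -/
import Mathlib

section
/- If Δ ⊆ ℂ is measurable and there exists R > 0 such that ρ(Δ, R) < (1 - e^{-π/R²})/2, then for every nonzero F ∈ 𝓕₁(ℂ), ∫_Δ |F(z)| e^{-π|z|²/2} dA(z) < ∫_{Δᶜ} |F(z)| e^{-π|z|²/2} dA(z). -/
/-!
For entire `H`, `‖H‖` is subharmonic, so integrating `‖H z‖ e^{-α|z|²/2}` over the disc `D_r` in
polar coordinates gives `c ‖H 0‖ ≤ ∫_{D_r} ‖H z‖ e^{-α|z|²/2}` with `c = 2π(1 - e^{-αr²/2})/α`.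
Applied to the Bargmann–Fock translate `F(z + w) e^{-α z w̄ - α|w|²/2}`, this says that the density
`u = ‖F‖ e^{-α|z|²/2}` satisfies `c u(w) ≤ ∫_{D_r(w)} u` at every point. Integrating over `w ∈ Δ`
and exchanging the integrals gives `c ∫_Δ u ≤ ρ(Δ, r) ∫ u`, so `∫_Δ u < ∫ u / 2` once `ρ < c / 2`.
For `α = π` and `r = 1/R`, `c / 2 = 1 - e^{-π/(2R²)}`, which is at least `(1 - e^{-π/R²})/2`.
-/

open MeasureTheory

/-- Planar maximum Nyquist density (the plane identified with `ℂ`). -/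
noncomputable def planarRho (Δ : Set ℂ) (R : ℝ) : ENNReal :=
  ⨆ z : ℂ, volume (Δ ∩ Metric.closedBall z (1 / R))

open Metric Set Real ComplexConjugate

theorem DiffContOnCl.norm_le_circleAverage_norm {E : Type*} [NormedAddCommGroup E]
    [NormedSpace ℂ E] [CompleteSpace E] {f : ℂ → E} {c : ℂ} {R : ℝ}
    (hf : DiffContOnCl ℂ f (ball c |R|)) :
    ‖f c‖ ≤ Real.circleAverage (fun z ↦ ‖f z‖) c R := by
  rw [← hf.circleAverage, circleAverage_def, circleAverage_def, norm_smul, smul_eq_mul,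
    norm_inv, Real.norm_of_nonneg two_pi_pos.le]
  gcongr
  exact intervalIntegral.norm_integral_le_integral_norm two_pi_pos.le

theorem circleAverage_eq_integral_Ioo {E : Type*} [NormedAddCommGroup E] [NormedSpace ℝ E]
    (f : ℂ → E) (c : ℂ) (R : ℝ) :
    circleAverage f c R = (2 * π)⁻¹ • ∫ θ in Ioo (-π) π, f (circleMap c R θ) := by
  rw [circleAverage_eq_integral_add (-π), intervalIntegral.integral_comp_add_right
    (fun θ ↦ f (circleMap c R θ)), ← integral_Ioc_eq_integral_Ioo,
    ← intervalIntegral.integral_of_le (by linarith [pi_pos])]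
  ring_nf

theorem integral_mul_exp_neg_mul_sq_div_two {α : ℝ} (hα : α ≠ 0) (r : ℝ) :
    ∫ s in (0 : ℝ)..r, s * exp (-α * s ^ 2 / 2) = (1 - exp (-α * r ^ 2 / 2)) / α := by
  have hderiv (s : ℝ) : HasDerivAt (fun t ↦ exp (-α * t ^ 2 / 2) / -α)
      (s * exp (-α * s ^ 2 / 2)) s := by
    refine ((((hasDerivAt_pow 2 s).const_mul (-α)).div_const 2).exp.div_const (-α)).congr_deriv ?_
    field_simp
    ring
  rw [intervalIntegral.integral_eq_sub_of_hasDerivAt (fun s _ ↦ hderiv s)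
    (by apply Continuous.intervalIntegrable; fun_prop)]
  field_simp
  simp [neg_add_eq_sub]

theorem polarCoord_symm_eq_circleMap (p : ℝ × ℝ) :
    Complex.polarCoord.symm p = circleMap 0 p.1 p.2 := by
  simp [circleMap, Complex.exp_mul_I, mul_add]

theorem integral_closedBall_zero_eq_integral_circleAverage {E : Type*} [NormedAddCommGroup E]
    [NormedSpace ℝ E] [CompleteSpace E] {g : ℂ → E} (hg : Continuous g) {r : ℝ} (hr : 0 ≤ r) :
    ∫ z in closedBall (0 : ℂ) r, g z = ∫ s in (0 : ℝ)..r, (2 * π * s) • circleAverage g 0 s := by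
  set S : Set (ℝ × ℝ) := Ioc 0 r ×ˢ Ioo (-π) π
  set φ : ℝ × ℝ → E := fun p ↦ p.1 • g (circleMap 0 p.1 p.2)
  have hS : S ⊆ polarCoord.target := by
    rw [polarCoord_target]
    exact prod_mono Ioc_subset_Ioi_self subset_rfl
  have hpolar : EqOn (fun p ↦ p.1 • (closedBall (0 : ℂ) r).indicator g (Complex.polarCoord.symm p))
      (S.indicator φ) polarCoord.target := by
    rintro ⟨s, θ⟩ ⟨hs : 0 < s, hθ⟩
    have hball : Complex.polarCoord.symm (s, θ) ∈ closedBall (0 : ℂ) r ↔ (s, θ) ∈ S := by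
      simp [S, abs_of_pos hs, hs, hθ]
    dsimp only
    by_cases hsr : (s, θ) ∈ S
    · rw [indicator_of_mem (hball.2 hsr), indicator_of_mem hsr, polarCoord_symm_eq_circleMap]
    · rw [indicator_of_notMem (mt hball.1 hsr), indicator_of_notMem hsr, smul_zero]
  have hφ : IntegrableOn φ S := by
    refine (ContinuousOn.integrableOn_compact isCompact_Icc ?_).mono_set
      (t := Icc (0, -π) (r, π)) ?_
    · exact (by fun_prop : Continuous φ).continuousOn
    · rw [← Icc_prod_Icc]
      exact prod_mono Ioc_subset_Icc_self Ioo_subset_Icc_self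
  calc ∫ z in closedBall (0 : ℂ) r, g z
      = ∫ p in polarCoord.target, p.1 • (closedBall (0 : ℂ) r).indicator g
          (Complex.polarCoord.symm p) := by
        rw [Complex.integral_comp_polarCoord_symm, integral_indicator measurableSet_closedBall]
    _ = ∫ p in S, φ p := by
        rw [setIntegral_congr_fun polarCoord.open_target.measurableSet hpolar,
          setIntegral_indicator (measurableSet_Ioc.prod measurableSet_Ioo),
          inter_eq_self_of_subset_right hS]
    _ = ∫ s in Ioc 0 r, ∫ θ in Ioo (-π) π, φ (s, θ) := setIntegral_prod φ hφ
    _ = ∫ s in (0 : ℝ)..r, (2 * π * s) • circleAverage g 0 s := by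
        rw [intervalIntegral.integral_of_le hr]
        refine setIntegral_congr_fun measurableSet_Ioc fun s _ ↦ ?_
        rw [circleAverage_eq_integral_Ioo, smul_smul, integral_smul]
        field_simp

theorem circleAverage_mul_comp_norm (f : ℂ → ℝ) (ω : ℝ → ℝ) (s : ℝ) :
    circleAverage (fun z ↦ f z * ω ‖z‖) 0 s = circleAverage f 0 s * ω |s| := by
  rw [mul_comm, ← smul_eq_mul, ← circleAverage_fun_smul]
  refine circleAverage_congr_sphere fun z hz ↦ ?_
  rw [mem_sphere_zero_iff_norm.mp hz, smul_eq_mul, mul_comm]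

theorem norm_mul_integral_closedBall_le_integral_norm_mul {E : Type*} [NormedAddCommGroup E]
    [NormedSpace ℂ E] [CompleteSpace E] {H : ℂ → E} (hH : Differentiable ℂ H) {ω : ℝ → ℝ}
    (hω : Continuous ω) (hω₀ : 0 ≤ ω) {r : ℝ} (hr : 0 ≤ r) :
    ‖H 0‖ * ∫ z in closedBall (0 : ℂ) r, ω ‖z‖ ≤ ∫ z in closedBall (0 : ℂ) r, ‖H z‖ * ω ‖z‖ := by
  have hH_cont := hH.continuous
  rw [← integral_const_mul,
    integral_closedBall_zero_eq_integral_circleAverage (by fun_prop) hr,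
    integral_closedBall_zero_eq_integral_circleAverage (by fun_prop) hr]
  refine intervalIntegral.integral_mono_on hr (by apply Continuous.intervalIntegrable; fun_prop)
    (by apply Continuous.intervalIntegrable; fun_prop) fun s ⟨hs, _⟩ ↦ ?_
  rw [circleAverage_mul_comp_norm (fun _ ↦ ‖H 0‖), circleAverage_mul_comp_norm, circleAverage_const]
  have hω_s := hω₀ |s|
  gcongr
  exact hH.diffContOnCl.norm_le_circleAverage_norm

theorem integral_closedBall_exp_neg_mul_norm_sq {α : ℝ} (hα : α ≠ 0) {r : ℝ} (hr : 0 ≤ r) :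
    ∫ z in closedBall (0 : ℂ) r, exp (-α * ‖z‖ ^ 2 / 2)
      = 2 * π * (1 - exp (-α * r ^ 2 / 2)) / α := by
  rw [integral_closedBall_zero_eq_integral_circleAverage (by fun_prop) hr]
  have hcircle (s : ℝ) :
      circleAverage (fun z ↦ exp (-α * ‖z‖ ^ 2 / 2)) 0 s = exp (-α * s ^ 2 / 2) :=
    circleAverage_const_on_circle fun z hz ↦ by rw [mem_sphere_zero_iff_norm.mp hz, sq_abs]
  simp_rw [hcircle, smul_eq_mul, mul_assoc, intervalIntegral.integral_const_mul,
    integral_mul_exp_neg_mul_sq_div_two hα]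
  ring

theorem exp_neg_mul_norm_add_sq (α : ℝ) (z w : ℂ) :
    exp (-α * ‖z + w‖ ^ 2 / 2)
      = ‖Complex.exp (-α * (z * conj w) - α * ‖w‖ ^ 2 / 2)‖ * exp (-α * ‖z‖ ^ 2 / 2) := by
  rw [Complex.norm_exp, ← exp_add, Complex.sub_re, ← Complex.ofReal_neg, Complex.re_ofReal_mul,
    Complex.div_ofNat_re, ← Complex.ofReal_pow, ← Complex.ofReal_mul, Complex.ofReal_re,
    ← Complex.normSq_eq_norm_sq, ← Complex.normSq_eq_norm_sq, ← Complex.normSq_eq_norm_sq,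
    Complex.normSq_add]
  ring_nf

theorem mul_norm_mul_exp_le_integral_closedBall {F : ℂ → ℂ} (hF : Differentiable ℂ F) {α : ℝ}
    (hα : α ≠ 0) {r : ℝ} (hr : 0 ≤ r) (w : ℂ) :
    2 * π * (1 - exp (-α * r ^ 2 / 2)) / α * (‖F w‖ * exp (-α * ‖w‖ ^ 2 / 2))
      ≤ ∫ z in closedBall w r, ‖F z‖ * exp (-α * ‖z‖ ^ 2 / 2) := by
  -- The Bargmann–Fock translate of `F` by `w`.
  set H : ℂ → ℂ := fun z ↦ F (z + w) * Complex.exp (-α * (z * conj w) - α * ‖w‖ ^ 2 / 2)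
  have hH : Differentiable ℂ H :=
    (hF.comp (differentiable_id.add_const w)).mul (by fun_prop)
  have hHnorm (z : ℂ) :
      ‖H z‖ * exp (-α * ‖z‖ ^ 2 / 2) = ‖F (z + w)‖ * exp (-α * ‖z + w‖ ^ 2 / 2) := by
    rw [exp_neg_mul_norm_add_sq, norm_mul, mul_assoc]
  calc 2 * π * (1 - exp (-α * r ^ 2 / 2)) / α * (‖F w‖ * exp (-α * ‖w‖ ^ 2 / 2))
      = ‖H 0‖ * ∫ z in closedBall (0 : ℂ) r, exp (-α * ‖z‖ ^ 2 / 2) := by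
        have hH0 : ‖H 0‖ = ‖F w‖ * exp (-α * ‖w‖ ^ 2 / 2) := by simpa using hHnorm 0
        rw [hH0, integral_closedBall_exp_neg_mul_norm_sq hα hr, mul_comm]
    _ ≤ ∫ z in closedBall (0 : ℂ) r, ‖H z‖ * exp (-α * ‖z‖ ^ 2 / 2) :=
        norm_mul_integral_closedBall_le_integral_norm_mul (ω := fun s ↦ exp (-α * s ^ 2 / 2)) hH
          (by fun_prop) (fun _ ↦ (exp_pos _).le) hr
    _ = ∫ z in closedBall w r, ‖F z‖ * exp (-α * ‖z‖ ^ 2 / 2) := by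
        simp_rw [hHnorm]
        have := (measurePreserving_add_right volume w).setIntegral_preimage_emb
          (measurableEmbedding_addRight w) (fun z ↦ ‖F z‖ * exp (-α * ‖z‖ ^ 2 / 2)) (closedBall w r)
        rwa [preimage_add_right_closedBall, sub_self] at this

open scoped ENNReal in
theorem mul_setLIntegral_le_iSup_measure_inter_closedBall_mul_lintegral {X : Type*}
    [PseudoMetricSpace X] [SecondCountableTopology X] [MeasurableSpace X] [OpensMeasurableSpace X]
    (μ : Measure X) [SFinite μ] {U : X → ℝ≥0∞} (hU : Measurable U) {c : ℝ≥0∞} {r : ℝ}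
    (hloc : ∀ w, c * U w ≤ ∫⁻ z in closedBall w r, U z ∂μ) (Δ : Set X) :
    c * ∫⁻ w in Δ, U w ∂μ ≤ (⨆ z, μ (Δ ∩ closedBall z r)) * ∫⁻ z, U z ∂μ := by
  set K : X × X → ℝ≥0∞ := fun p ↦ (closedBall p.1 r).indicator U p.2
  have hK : Measurable K := by
    have hset : MeasurableSet {p : X × X | dist p.2 p.1 ≤ r} :=
      measurableSet_le (by fun_prop) measurable_const
    exact (hU.comp measurable_snd).indicator hset
  have hinner (z : X) : ∫⁻ w in Δ, K (w, z) ∂μ = U z * μ (Δ ∩ closedBall z r) := by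
    have (w : X) : K (w, z) = (closedBall z r).indicator (fun _ ↦ U z) w := by
      simp only [K, indicator, mem_closedBall, dist_comm]
    simp_rw [this]
    rw [lintegral_indicator_const measurableSet_closedBall,
      Measure.restrict_apply measurableSet_closedBall, inter_comm]
  calc c * ∫⁻ w in Δ, U w ∂μ
      = ∫⁻ w in Δ, c * U w ∂μ := (lintegral_const_mul _ hU).symm
    _ ≤ ∫⁻ w in Δ, (∫⁻ z, K (w, z) ∂μ) ∂μ := by
        refine lintegral_mono fun w ↦ ?_
        rw [lintegral_indicator measurableSet_closedBall]
        exact hloc w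
    _ = ∫⁻ z, (∫⁻ w in Δ, K (w, z) ∂μ) ∂μ := lintegral_lintegral_swap hK.aemeasurable
    _ = ∫⁻ z, U z * μ (Δ ∩ closedBall z r) ∂μ := by simp_rw [hinner]
    _ ≤ ∫⁻ z, U z * ⨆ z, μ (Δ ∩ closedBall z r) ∂μ :=
        lintegral_mono fun z ↦ mul_le_mul_right (le_iSup (fun z ↦ μ (Δ ∩ closedBall z r)) z) _
    _ = (⨆ z, μ (Δ ∩ closedBall z r)) * ∫⁻ z, U z ∂μ := by
        rw [lintegral_mul_const _ hU, mul_comm]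

theorem setIntegral_lt_setIntegral_compl_of_mul_le_integral_closedBall {X : Type*}
    [PseudoMetricSpace X] [SecondCountableTopology X] [MeasurableSpace X] [OpensMeasurableSpace X]
    (μ : Measure X) [SFinite μ] {u : X → ℝ} (hu : Integrable u μ) (hu_meas : Measurable u)
    (hu₀ : 0 ≤ u) (hu_pos : 0 < ∫ x, u x ∂μ) {c r : ℝ}
    (hloc : ∀ w, c * u w ≤ ∫ z in closedBall w r, u z ∂μ) {Δ : Set X} (hΔ : MeasurableSet Δ)
    (hsparse : ⨆ z, μ (Δ ∩ closedBall z r) < ENNReal.ofReal (c / 2)) :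
    ∫ x in Δ, u x ∂μ < ∫ x in Δᶜ, u x ∂μ := by
  have hlint (s : Set X) : ENNReal.ofReal (∫ x in s, u x ∂μ) = ∫⁻ x in s, ENNReal.ofReal (u x) ∂μ :=
    ofReal_integral_eq_lintegral_ofReal hu.integrableOn (ae_of_all _ hu₀)
  set ρ := ⨆ z, μ (Δ ∩ closedBall z r)
  set D := ∫⁻ x in Δ, ENNReal.ofReal (u x) ∂μ
  set T := ∫⁻ x, ENNReal.ofReal (u x) ∂μ
  have hT : T = ENNReal.ofReal (∫ x, u x ∂μ) := by
    rw [← setIntegral_univ, hlint, Measure.restrict_univ]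
  have hT₀ : T ≠ 0 := by rw [hT]; exact (ENNReal.ofReal_pos.2 hu_pos).ne'
  have hTtop : T ≠ ⊤ := hT ▸ ENNReal.ofReal_ne_top
  have hcounting : ENNReal.ofReal c * D ≤ ρ * T := by
    refine mul_setLIntegral_le_iSup_measure_inter_closedBall_mul_lintegral μ hu_meas.ennreal_ofReal
      (fun w ↦ ?_) Δ
    rw [← ENNReal.ofReal_mul' (hu₀ w), ← hlint]
    exact ENNReal.ofReal_le_ofReal (hloc w)
  have htwice : 2 * D < T := by
    refine lt_of_mul_lt_mul_left' (a := ENNReal.ofReal c) ?_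
    calc ENNReal.ofReal c * (2 * D) = 2 * (ENNReal.ofReal c * D) := by ring
      _ ≤ 2 * (ρ * T) := by gcongr
      _ < 2 * (ENNReal.ofReal (c / 2) * T) :=
        ENNReal.mul_lt_mul_right two_ne_zero ENNReal.ofNat_ne_top
          (ENNReal.mul_lt_mul_left hT₀ hTtop hsparse)
      _ = ENNReal.ofReal c * T := by
        rw [← mul_assoc, ← ENNReal.ofReal_ofNat 2, ← ENNReal.ofReal_mul zero_le_two]
        ring_nf
  have hD_lt : D < ∫⁻ x in Δᶜ, ENNReal.ofReal (u x) ∂μ := by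
    have hsplit : D + ∫⁻ x in Δᶜ, ENNReal.ofReal (u x) ∂μ = T := lintegral_add_compl _ hΔ
    rw [← hsplit, two_mul] at htwice
    exact (ENNReal.add_lt_add_iff_left (le_self_add.trans_lt htwice).ne_top).mp htwice
  refine (ENNReal.ofReal_lt_ofReal_iff_of_nonneg (setIntegral_nonneg hΔ fun x _ ↦ hu₀ x)).mp ?_
  rwa [hlint, hlint]

theorem one_sub_exp_two_mul_div_two_le (x : ℝ) : (1 - exp (2 * x)) / 2 ≤ 1 - exp x := by
  rw [two_mul, exp_add]
  nlinarith [sq_nonneg (1 - exp x)]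

/-- If `ρ(Δ,R) < (1 - e^{-π/R²})/2` for some `R > 0`, then every nonzero `F ∈ 𝓕₁(ℂ)` has
strictly less mass on `Δ` than on its complement. -/
theorem sparse_set_minority_mass (Δ : Set ℂ) (hΔ : MeasurableSet Δ) (R : ℝ) (hR : 0 < R)
    (hρ : planarRho Δ R < ENNReal.ofReal ((1 - Real.exp (-Real.pi / R ^ 2)) / 2))
    (F : ℂ → ℂ) (hF : Differentiable ℂ F)
    (hF1 : Integrable (fun z : ℂ => ‖F z‖ * Real.exp (-Real.pi * ‖z‖ ^ 2 / 2)))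
    (hF0 : F ≠ 0) :
    ∫ z in Δ, ‖F z‖ * Real.exp (-Real.pi * ‖z‖ ^ 2 / 2)
      < ∫ z in Δᶜ, ‖F z‖ * Real.exp (-Real.pi * ‖z‖ ^ 2 / 2) := by
  set u : ℂ → ℝ := fun z ↦ ‖F z‖ * exp (-π * ‖z‖ ^ 2 / 2)
  have hu_cont : Continuous u := by have := hF.continuous; fun_prop
  have hu₀ : 0 ≤ u := fun z ↦ by positivity
  have hu_pos : 0 < ∫ z, u z := by
    obtain ⟨z, hz⟩ := Function.ne_iff.mp hF0
    refine (integral_pos_iff_support_of_nonneg hu₀ hF1).2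
      (hu_cont.isOpen_support.measure_pos volume ⟨z, ?_⟩)
    simpa [u] using hz
  have hloc (w : ℂ) :
      2 * (1 - exp (-π * (1 / R) ^ 2 / 2)) * u w ≤ ∫ z in closedBall w (1 / R), u z := by
    convert mul_norm_mul_exp_le_integral_closedBall hF pi_ne_zero (by positivity : 0 ≤ 1 / R) w
      using 2
    field_simp
  have hsparse :
      planarRho Δ R < ENNReal.ofReal (2 * (1 - exp (-π * (1 / R) ^ 2 / 2)) / 2) := by
    refine hρ.trans_le (ENNReal.ofReal_le_ofReal ?_)
    convert one_sub_exp_two_mul_div_two_le (-π * (1 / R) ^ 2 / 2) using 4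
    · field_simp
    · ring
  exact setIntegral_lt_setIntegral_compl_of_mul_le_integral_closedBall volume hF1
    hu_cont.measurable hu₀ hu_pos hloc hΔ hsparse
end

section
/- Let Δ ⊆ ℂ be measurable with δ(Δ) := sup_{0≠F∈𝓕₁} (∫_Δ |F|e^{-π|z|²/2}dA)/‖F‖_{𝓛₁} < 1, let f ∈ 𝓕₁(ℂ), let N have weighted L¹ norm ‖N‖ ≤ ε, and set H = χ_{Δᶜ}(f + N). If σ ∈ 𝓕₁(ℂ) satisfies ‖χ_{Δᶜ}(H - σ)‖_{𝓛₁} ≤ ‖χ_{Δᶜ}(H - g)‖_{𝓛₁} for all g ∈ 𝓕₁(ℂ), then ‖f - σ‖_{𝓛₁} ≤ 2ε/(1 - δ(Δ)). -/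
open MeasureTheory

/-- Gaussian-weighted L¹ (Fock) norm. -/
noncomputable def fockNorm (F : ℂ → ℂ) : ℝ :=
  ∫ z : ℂ, ‖F z‖ * Real.exp (-Real.pi * ‖z‖ ^ 2 / 2)

/-- Membership in the Fock space `𝓕₁(ℂ)`: entire with finite weighted L¹ norm. -/
def MemFock1 (F : ℂ → ℂ) : Prop :=
  Differentiable ℂ F ∧
    Integrable (fun z : ℂ => ‖F z‖ * Real.exp (-Real.pi * ‖z‖ ^ 2 / 2))

/-- `δ(Δ) = sup_{0 ≠ F ∈ 𝓕₁} (∫_Δ |F| e^{-π|z|²/2} dA)/‖F‖_{𝓛₁}`. -/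
noncomputable def fockDelta (Δ : Set ℂ) : ℝ :=
  ⨆ F : {F : ℂ → ℂ // MemFock1 F ∧ F ≠ 0},
    (∫ z in Δ, ‖F.1 z‖ * Real.exp (-Real.pi * ‖z‖ ^ 2 / 2)) / fockNorm F.1

/-! Split `f - σ ∈ 𝓕₁` along `Δ`. On `Δ` its weighted mass is at most `δ ‖f - σ‖` by the
definition of `δ`. Off `Δ` we have `f - σ = (H - σ) - N`, and comparing the minimiser `σ` with
the feasible `f` gives `‖χ_{Δᶜ}(H - σ)‖ ≤ ‖χ_{Δᶜ}(H - f)‖ = ‖χ_{Δᶜ} N‖ ≤ ε`, so the mass off `Δ`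
is at most `2ε`. Hence `(1 - δ) ‖f - σ‖ ≤ 2ε`. -/

noncomputable def fockWeight (z : ℂ) : ℝ := Real.exp (-Real.pi * ‖z‖ ^ 2 / 2)

def FockIntegrable (F : ℂ → ℂ) : Prop := Integrable fun z => ‖F z‖ * fockWeight z

lemma fockWeight_pos (z : ℂ) : 0 < fockWeight z := Real.exp_pos _

lemma continuous_fockWeight : Continuous fockWeight := by unfold fockWeight; fun_prop

lemma norm_mul_fockWeight_nonneg (F : ℂ → ℂ) (z : ℂ) : 0 ≤ ‖F z‖ * fockWeight z :=
  mul_nonneg (norm_nonneg _) (fockWeight_pos z).le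

lemma fockNorm_eq (F : ℂ → ℂ) : fockNorm F = ∫ z, ‖F z‖ * fockWeight z := rfl

lemma fockNorm_nonneg (F : ℂ → ℂ) : 0 ≤ fockNorm F :=
  integral_nonneg (norm_mul_fockWeight_nonneg F)

lemma fockNorm_indicator {s : Set ℂ} (hs : MeasurableSet s) (F : ℂ → ℂ) :
    fockNorm (s.indicator F) = ∫ z in s, ‖F z‖ * fockWeight z := by
  rw [fockNorm_eq, ← integral_indicator hs]
  congr 1 with z
  by_cases hz : z ∈ s <;> simp [hz, fockWeight]

lemma setIntegral_le_fockNorm {F : ℂ → ℂ} (hF : FockIntegrable F) (s : Set ℂ) :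
    ∫ z in s, ‖F z‖ * fockWeight z ≤ fockNorm F :=
  setIntegral_le_integral hF (.of_forall (norm_mul_fockWeight_nonneg F))

lemma FockIntegrable.of_norm_le_add {F G K : ℂ → ℂ} (hF : AEStronglyMeasurable F)
    (hG : FockIntegrable G) (hK : FockIntegrable K) (h : ∀ z, ‖F z‖ ≤ ‖G z‖ + ‖K z‖) :
    FockIntegrable F := by
  refine (hG.add hK).mono' (hF.norm.mul continuous_fockWeight.aestronglyMeasurable)
    (.of_forall fun z => ?_)
  rw [Real.norm_of_nonneg (norm_mul_fockWeight_nonneg F z), Pi.add_apply, ← add_mul]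
  exact mul_le_mul_of_nonneg_right (h z) (fockWeight_pos z).le

lemma fockNorm_le_add_of_norm_le {F G K : ℂ → ℂ} (hG : FockIntegrable G)
    (hK : FockIntegrable K) (h : ∀ z, ‖F z‖ ≤ ‖G z‖ + ‖K z‖) :
    fockNorm F ≤ fockNorm G + fockNorm K := by
  rw [fockNorm_eq, fockNorm_eq, fockNorm_eq, ← integral_add hG hK]
  refine integral_mono_of_nonneg (.of_forall (norm_mul_fockWeight_nonneg F)) (hG.add hK)
    (.of_forall fun z => ?_)
  simpa only [← add_mul] using mul_le_mul_of_nonneg_right (h z) (fockWeight_pos z).le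

lemma MemFock1.sub {F G : ℂ → ℂ} (hF : MemFock1 F) (hG : MemFock1 G) :
    MemFock1 fun z => F z - G z :=
  ⟨hF.1.sub hG.1, FockIntegrable.of_norm_le_add (hF.1.sub hG.1).continuous.aestronglyMeasurable
    hF.2 hG.2 fun _ => norm_sub_le _ _⟩

lemma setIntegral_le_fockDelta_mul (Δ : Set ℂ) {F : ℂ → ℂ} (hF : MemFock1 F) :
    ∫ z in Δ, ‖F z‖ * fockWeight z ≤ fockDelta Δ * fockNorm F := by
  have hmass := setIntegral_le_fockNorm hF.2 Δ
  rcases (fockNorm_nonneg F).eq_or_lt with hzero | hpos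
  · rw [← hzero] at hmass ⊢
    simpa using hmass
  have hne : F ≠ 0 := by
    rintro rfl
    simp [fockNorm] at hpos
  have hbdd : BddAbove (Set.range fun F : {F : ℂ → ℂ // MemFock1 F ∧ F ≠ 0} =>
      (∫ z in Δ, ‖F.1 z‖ * fockWeight z) / fockNorm F.1) := by
    refine ⟨1, ?_⟩
    rintro _ ⟨F', rfl⟩
    exact div_le_one_of_le₀ (setIntegral_le_fockNorm F'.2.1.2 Δ) (fockNorm_nonneg _)
  rw [← div_le_iff₀ hpos]
  exact le_ciSup hbdd ⟨F, hF, hne⟩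

/-- Missing-data recovery (Corollary 2, Fock model): if `δ(Δ) < 1`, `f ∈ 𝓕₁(ℂ)`,
`‖N‖ ≤ ε`, and `H = χ_{Δᶜ}(f + N)` is observed, then any minimizer `σ` of
`g ↦ ‖χ_{Δᶜ}(H - g)‖_{𝓛₁}` over `𝓕₁(ℂ)` satisfies `‖f - σ‖ ≤ 2ε/(1 - δ(Δ))`. -/
theorem missing_data_recovery (Δ : Set ℂ) (hΔ : MeasurableSet Δ)
    (hδ : fockDelta Δ < 1)
    (f : ℂ → ℂ) (hf : MemFock1 f)
    (N : ℂ → ℂ) (hNmeas : Measurable N) (ε : ℝ)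
    (hN1 : Integrable (fun z : ℂ => ‖N z‖ * Real.exp (-Real.pi * ‖z‖ ^ 2 / 2)))
    (hNε : fockNorm N ≤ ε)
    (H : ℂ → ℂ) (hH : H = Δᶜ.indicator (fun z => f z + N z))
    (σ : ℂ → ℂ) (hσ : MemFock1 σ)
    (hmin : ∀ g : ℂ → ℂ, MemFock1 g →
      fockNorm (Δᶜ.indicator (fun z => H z - σ z)) ≤ fockNorm (Δᶜ.indicator (fun z => H z - g z))) :
    fockNorm (fun z => f z - σ z) ≤ 2 * ε / (1 - fockDelta Δ) := by
  have hG : MemFock1 fun z => f z - σ z := hf.sub hσ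
  have hobs (g : ℂ → ℂ) :
      Δᶜ.indicator (fun z => H z - g z) = Δᶜ.indicator (fun z => f z - g z + N z) :=
    Set.indicator_congr fun z hz => by rw [hH, Set.indicator_of_mem hz]; ring
  have hresidual : fockNorm (Δᶜ.indicator fun z => H z - σ z) ≤ ε := calc
    _ ≤ fockNorm (Δᶜ.indicator fun z => H z - f z) := hmin f hf
    _ = ∫ z in Δᶜ, ‖N z‖ * fockWeight z := by simp [hobs, fockNorm_indicator hΔ.compl]
    _ ≤ ε := (setIntegral_le_fockNorm hN1 _).trans hNε
  -- integrability matters: otherwise `hresidual` would only bound the junk value `0`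
  have hresidual_int : FockIntegrable (Δᶜ.indicator fun z => H z - σ z) := by
    rw [hobs]
    exact .of_norm_le_add
      ((hG.1.continuous.measurable.add hNmeas).indicator hΔ.compl).aestronglyMeasurable hG.2 hN1
      fun z => (norm_indicator_le_norm_self _ z).trans (norm_add_le _ _)
  have hout : ∫ z in Δᶜ, ‖f z - σ z‖ * fockWeight z ≤ 2 * ε := by
    rw [← fockNorm_indicator hΔ.compl]
    refine (fockNorm_le_add_of_norm_le hresidual_int hN1 fun z => ?_).trans (by linarith)
    rw [hobs]
    by_cases hz : z ∈ Δᶜ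
    · simpa [hz] using norm_le_add_norm_add (f z - σ z) (N z)
    · simp [hz]
  have hin := setIntegral_le_fockDelta_mul Δ hG
  have hsplit : (∫ z in Δ, ‖f z - σ z‖ * fockWeight z) + ∫ z in Δᶜ, ‖f z - σ z‖ * fockWeight z
      = fockNorm fun z => f z - σ z := integral_add_compl hΔ hG.2
  rw [le_div_iff₀ (sub_pos.2 hδ)]
  linarith
end
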